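/- Let H ∈ ℝ^{m×m} be symmetric positive semidefinite and let v, d ∈ ℝ^m. Then v^T H d ≥ (1/2)(v^T d − ‖v‖‖d‖) ‖H‖. -/

import Mathlib

open Matrix

noncomputable def vnorm {m : ℕ} (v : Fin m → ℝ) : ℝ := Real.sqrt (v ⬝ᵥ v)

noncomputable def opNorm {m : ℕ} (M : Matrix (Fin m) (Fin m) ℝ) : ℝ :=
  ‖Matrix.toEuclideanCLM (𝕜 := ℝ) M‖

/-!
For a positive operator `T` and `a = ‖x‖`, `b = ‖y‖`, polarization gives
`4ab ⟪x, T y⟫ = ⟪z, T z⟫ - ⟪w, T w⟫` with `z = b • x + a • y` and `w = b • x - a • y`.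
The first term is nonnegative, and the second is at most
`‖T‖ ‖w‖² = 2ab (ab - ⟪x, y⟫) ‖T‖`; dividing by `4ab` gives the bound.
A positive semidefinite matrix acts as a positive operator on Euclidean space,
where `⬝ᵥ` is the inner product and `vnorm` the norm.
-/

open scoped RealInnerProductSpace

namespace ContinuousLinearMap

variable {E : Type*} [NormedAddCommGroup E] [InnerProductSpace ℝ E]

lemma inner_map_self_le_opNorm_mul_sq (T : E →L[ℝ] E) (x : E) :
    ⟪x, T x⟫ ≤ ‖T‖ * ‖x‖ ^ 2 :=
  calc ⟪x, T x⟫ ≤ ‖x‖ * ‖T x‖ := real_inner_le_norm _ _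
    _ ≤ ‖x‖ * (‖T‖ * ‖x‖) := by gcongr; exact T.le_opNorm x
    _ = ‖T‖ * ‖x‖ ^ 2 := by ring

theorem IsPositive.half_mul_inner_sub_norm_mul_norm_mul_opNorm_le {T : E →L[ℝ] E}
    (hT : T.IsPositive) (x y : E) :
    (1 / 2) * (⟪x, y⟫ - ‖x‖ * ‖y‖) * ‖T‖ ≤ ⟪x, T y⟫ := by
  rcases (mul_nonneg (norm_nonneg x) (norm_nonneg y)).eq_or_lt with hxy | hxy
  · rcases mul_eq_zero.mp hxy.symm with hx | hy
    · simp [norm_eq_zero.mp hx]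
    · simp [norm_eq_zero.mp hy]
  set a := ‖x‖ with ha
  set b := ‖y‖ with hb
  have hpol : 4 * (b * a * ⟪x, T y⟫) =
      ⟪b • x + a • y, T (b • x + a • y)⟫ - ⟪b • x - a • y, T (b • x - a • y)⟫ := by
    have := hT.isSymmetric.inner_map_polarization (b • x) (a • y)
    simp only [RCLike.I_to_real, zero_mul, sub_zero, add_zero, coe_coe, map_smul,
      inner_smul_left, inner_smul_right, conj_trivial, hT.inner_left_eq_inner_right] at this
    linarith
  have hsum : 0 ≤ ⟪b • x + a • y, T (b • x + a • y)⟫ := hT.re_inner_nonneg_right _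
  have hdiff := T.inner_map_self_le_opNorm_mul_sq (b • x - a • y)
  have hnorm : ‖b • x - a • y‖ ^ 2 = 2 * (a * b) * (a * b - ⟪x, y⟫) := by
    rw [norm_sub_sq_real, norm_smul, norm_smul, inner_smul_left, inner_smul_right, ← ha, ← hb,
      Real.norm_of_nonneg (norm_nonneg y), Real.norm_of_nonneg (norm_nonneg x), conj_trivial]
    ring
  rw [hnorm] at hdiff
  refine le_of_mul_le_mul_left ?_ (by positivity : 0 < 4 * (a * b))
  linarith

end ContinuousLinearMap

lemma vnorm_eq_norm_toLp {m : ℕ} (v : Fin m → ℝ) : vnorm v = ‖WithLp.toLp 2 v‖ := by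
  rw [norm_eq_sqrt_real_inner, EuclideanSpace.inner_toLp_toLp, vnorm, star_trivial]

open scoped ComplexOrder in
lemma Matrix.PosSemidef.isPositive_toEuclideanCLM {𝕜 n : Type*} [RCLike 𝕜] [Fintype n]
    [DecidableEq n] {A : Matrix n n 𝕜} (hA : A.PosSemidef) :
    (toEuclideanCLM (𝕜 := 𝕜) A).IsPositive := by
  rw [← ContinuousLinearMap.isPositive_toLinearMap_iff, coe_toEuclideanCLM_eq_toEuclideanLin]
  exact isPositive_toEuclideanLin_iff.mpr hA

theorem stmt_12 (m : ℕ) (H : Matrix (Fin m) (Fin m) ℝ) (hH : H.PosSemidef)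
    (v d : Fin m → ℝ) :
    (1 / 2) * (v ⬝ᵥ d - vnorm v * vnorm d) * opNorm H ≤ v ⬝ᵥ H.mulVec d := by
  have := hH.isPositive_toEuclideanCLM.half_mul_inner_sub_norm_mul_norm_mul_opNorm_le
    (WithLp.toLp 2 v) (WithLp.toLp 2 d)
  rwa [inner_toEuclideanCLM, EuclideanSpace.inner_toLp_toLp, star_trivial, dotProduct_comm,
    ← vnorm_eq_norm_toLp, ← vnorm_eq_norm_toLp] at this
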